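/- Let p be a prime, G a finite abelian p-group that is not cyclic, with gcd(exp(G) − 2, D(G) − 2) = 1. Then for every minimal zero-sum sequence U over G of length D(G), there exist k ∈ ℕ and minimal zero-sum sequences U_1, …, U_k, V_1, …, V_{k+1} with all terms in supp(U) ∪ (−supp(U)) such that U_1 ⋯ U_k = V_1 ⋯ V_{k+1}. -/

import Mathlib

/-!
The support of a minimal zero-sum sequence `U` of maximal length `D(G)` generates `G`: if `U` lay
in a proper subgroup `H` and `g ∉ H` had order `m ≥ 2` modulo `H`, replacing one term `u` of `U`
by `m` terms congruent to `g` modulo `H` with sum `u` would give a minimal zero-sum sequence of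
length `D(G) - 1 + m`. In a `p`-group with `exp(G) = p ^ k` this forces a term `g` of order
`n = exp(G)`, since otherwise `U` lies in the kernel of multiplication by `p ^ (k - 1)`.

The atoms `g ^ n`, `(-g) ^ n`, `g (-g)`, `U`, `-U` and `u (-u)` for `u ∈ U` give the relations
`g ^ n (-g) ^ n = (g (-g)) ^ n` and `U (-U) = ∏ u (-u)`, of lengths `2 = n` and `2 = D(G)`.
As `gcd(n - 2, D(G) - 2) = 1`, some `a (n - 2) - b (D(G) - 2)` equals `±1`, and the sum of `a`
copies of one relation and `b` reversed copies of the other has lengths `k` and `k + 1`.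
-/

def IsMinZeroSum {G : Type*} [AddCommGroup G] (S : Multiset G) : Prop :=
  S ≠ 0 ∧ S.sum = 0 ∧ ∀ T : Multiset G, T ≤ S → T ≠ 0 → T ≠ S → T.sum ≠ 0

noncomputable def Dav (G : Type*) [AddCommGroup G] [Fintype G] : ℕ :=
  sSup {n : ℕ | ∃ S : Multiset G, IsMinZeroSum S ∧ Multiset.card S = n}

open Multiset

theorem Multiset.exists_le_le_eq_add_of_le_add {α : Type*} [DecidableEq α] {s t u : Multiset α}
    (h : s ≤ t + u) : ∃ t' ≤ t, ∃ u' ≤ u, s = t' + u' := by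
  refine ⟨s ∩ t, inter_le_right, s - t, ?_, ?_⟩
  · rw [Multiset.sub_le_iff_le_add, add_comm]
    exact h
  · ext a
    have := count_le_of_le a h
    simp only [count_add, count_inter, count_sub] at *
    omega

theorem List.exists_sublist_sum_eq_zero {G : Type*} [AddGroup G] [Fintype G] {l : List G}
    (hl : Fintype.card G < l.length) :
    ∃ s : List G, s.Sublist l ∧ s ≠ [] ∧ s.length < l.length ∧ s.sum = 0 := by
  obtain ⟨i, j, hij, hsum⟩ := Fintype.exists_ne_map_eq_of_card_lt
    (fun i : Fin l.length => (l.take i).sum) (by simpa using hl)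
  wlog hlt : i < j generalizing i j
  · exact this j i hij.symm hsum.symm (lt_of_le_of_ne (not_lt.mp hlt) hij.symm)
  have hlt' : (i : ℕ) < j := hlt
  refine ⟨(l.drop i).take (j - i), (take_sublist _ _).trans (drop_sublist _ _), ?_, ?_, ?_⟩
  · simp only [ne_eq, take_eq_nil_iff, drop_eq_nil_iff, not_or]
    omega
  · simp only [length_take, length_drop]
    omega
  · have htake : l.take j = l.take i ++ (l.drop i).take (j - i) := by
      rw [← take_add, Nat.add_sub_cancel' hlt'.le]
    simpa [htake] using hsum

section MinZeroSum

variable {G : Type*} [AddCommGroup G] {S : Multiset G}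

theorem isMinZeroSum_iff :
    IsMinZeroSum S ↔ S ≠ 0 ∧ S.sum = 0 ∧ ∀ T ≤ S, T.sum = 0 → T = 0 ∨ T = S := by
  refine and_congr_right' (and_congr_right' (forall_congr' fun T => ?_))
  constructor
  · intro h hT hsum
    by_contra! hne
    exact h hT hne.1 hne.2 hsum
  · intro h hT h0 hS hsum
    exact (h hT hsum).elim h0 hS

theorem IsMinZeroSum.eq_zero_or_eq (hS : IsMinZeroSum S) {T : Multiset G} (hT : T ≤ S)
    (hsum : T.sum = 0) : T = 0 ∨ T = S :=
  (isMinZeroSum_iff.mp hS).2.2 T hT hsum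

theorem IsMinZeroSum.ne_zero_of_mem (hS : IsMinZeroSum S) (hcard : 1 < card S) {x : G}
    (hx : x ∈ S) : x ≠ 0 := by
  rintro rfl
  rcases hS.eq_zero_or_eq (singleton_le.mpr hx) (sum_singleton 0) with h | h
  · exact singleton_ne_zero 0 h
  · simp [← h] at hcard

theorem IsMinZeroSum.card_le_fintype_card [Fintype G] (hS : IsMinZeroSum S) :
    card S ≤ Fintype.card G := by
  by_contra! hlt
  obtain ⟨s, hsub, hne, hlen, hsum⟩ :=
    List.exists_sublist_sum_eq_zero (l := S.toList) (by simpa using hlt)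
  have hle : (s : Multiset G) ≤ S := by
    simpa using (coe_le.mpr hsub.subperm : (s : Multiset G) ≤ S.toList)
  rcases hS.eq_zero_or_eq hle (by simpa using hsum) with h | h
  · exact hne (by simpa using h)
  · simp [← h] at hlen

theorem IsMinZeroSum.card_le_dav [Fintype G] (hS : IsMinZeroSum S) : card S ≤ Dav G :=
  le_csSup ⟨Fintype.card G, by rintro _ ⟨T, hT, rfl⟩; exact hT.card_le_fintype_card⟩
    ⟨S, hS, rfl⟩

theorem dav_le_card [Fintype G] : Dav G ≤ Fintype.card G :=
  csSup_le' (by rintro _ ⟨T, hT, rfl⟩; exact hT.card_le_fintype_card)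

theorem isMinZeroSum_pair {g : G} (hg : g ≠ 0) : IsMinZeroSum {g, -g} := by
  refine isMinZeroSum_iff.mpr ⟨by simp, by simp, fun T hT hsum => ?_⟩
  have hcard : card T ≤ 2 := by simpa using card_le_card hT
  interval_cases h : card T
  · exact .inl (card_eq_zero.mp h)
  · obtain ⟨x, rfl⟩ := card_eq_one.mp h
    have hx : x = g ∨ x = -g := by simpa using singleton_le.mp hT
    rcases hx with rfl | rfl <;> simp_all
  · exact .inr (eq_of_le_of_card_le hT (by simp [h]))

theorem isMinZeroSum_replicate_addOrderOf {g : G} (hg : 0 < addOrderOf g) :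
    IsMinZeroSum (replicate (addOrderOf g) g) := by
  refine isMinZeroSum_iff.mpr ⟨by simpa [← card_pos] using hg, by simp, fun T hT hsum => ?_⟩
  have hTrep : T = replicate (card T) g :=
    eq_replicate_card.mpr fun x hx => eq_of_mem_replicate (mem_of_le hT hx)
  have hdvd : addOrderOf g ∣ card T :=
    addOrderOf_dvd_of_nsmul_eq_zero (by rw [← sum_replicate, ← hTrep, hsum])
  have hle : card T ≤ addOrderOf g := by simpa using card_le_card hT
  rcases Nat.eq_zero_or_pos (card T) with h | h
  · exact .inl (card_eq_zero.mp h)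
  · exact .inr (by rw [hTrep, le_antisymm hle (Nat.le_of_dvd h hdvd)])

theorem IsMinZeroSum.map_addEquiv {H : Type*} [AddCommGroup H] (hS : IsMinZeroSum S)
    (e : G ≃+ H) : IsMinZeroSum (S.map e) := by
  refine isMinZeroSum_iff.mpr ⟨by simpa using hS.1, ?_, fun T hT hsum => ?_⟩
  · rw [← map_multiset_sum, hS.2.1, _root_.map_zero]
  have hTe : (T.map e.symm).map e = T := by simp [map_map]
  have hle : T.map e.symm ≤ S := by simpa [map_map] using map_le_map (f := e.symm) hT
  rcases hS.eq_zero_or_eq hle (by rw [← map_multiset_sum, hsum, _root_.map_zero]) with h | h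
  · exact .inl (by rw [← hTe, h, Multiset.map_zero])
  · exact .inr (by rw [← hTe, h])

theorem eq_zero_or_eq_of_map_sum_eq_zero {Q : Type*} [AddCommGroup Q] (f : G →+ Q)
    {T T₀ : Multiset G} {q : Q} (hT : ∀ x ∈ T, f x = q) (hTcard : card T = addOrderOf q)
    (hT₀ : T₀ ≤ T) (hsum : f T₀.sum = 0) : T₀ = 0 ∨ T₀ = T := by
  have hmap : T₀.map f = replicate (card T₀) q := by
    rw [← card_map f, eq_replicate_card]
    rintro _ hy
    obtain ⟨x, hx, rfl⟩ := mem_map.mp hy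
    exact hT x (mem_of_le hT₀ hx)
  have hdvd : addOrderOf q ∣ card T₀ := addOrderOf_dvd_of_nsmul_eq_zero <| by
    rw [← sum_replicate, ← hmap, ← map_multiset_sum, hsum]
  rcases Nat.eq_zero_or_pos (card T₀) with h | h
  · exact .inl (card_eq_zero.mp h)
  · exact .inr (eq_of_le_of_card_le hT₀ (hTcard ▸ Nat.le_of_dvd h hdvd))

theorem IsMinZeroSum.erase_add [DecidableEq G] {H : AddSubgroup G} {U T : Multiset G}
    {u₀ : G} {q : G ⧸ H} (hU : IsMinZeroSum U) (hUH : ∀ u ∈ U, u ∈ H) (hu₀ : u₀ ∈ U)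
    (hT : ∀ x ∈ T, (x : G ⧸ H) = q) (hq : 0 < addOrderOf q) (hTcard : card T = addOrderOf q)
    (hTsum : T.sum = u₀) : IsMinZeroSum (U.erase u₀ + T) := by
  have hUsum : u₀ + (U.erase u₀).sum = 0 := by rw [sum_erase hu₀, hU.2.1]
  refine isMinZeroSum_iff.mpr ⟨?_, ?_, fun W hW hsum => ?_⟩
  · exact fun h => card_pos.mp (hTcard ▸ hq) (add_eq_zero.mp h).2
  · rw [sum_add, hTsum, add_comm, hUsum]
  obtain ⟨S₀, hS₀, T₀, hT₀, rfl⟩ := exists_le_le_eq_add_of_le_add hW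
  have hS₀H : QuotientAddGroup.mk' H S₀.sum = 0 := (QuotientAddGroup.eq_zero_iff _).mpr <|
    H.multiset_sum_mem _ fun x hx => hUH x (mem_of_le (erase_le u₀ U) (mem_of_le hS₀ hx))
  have hT₀H : QuotientAddGroup.mk' H T₀.sum = 0 := by
    have := congrArg (QuotientAddGroup.mk' H) hsum
    rwa [sum_add, _root_.map_add, hS₀H, zero_add, _root_.map_zero] at this
  rcases eq_zero_or_eq_of_map_sum_eq_zero _ hT hTcard hT₀ hT₀H with rfl | rfl
  · rw [add_zero] at hsum ⊢
    rcases hU.eq_zero_or_eq (hS₀.trans (erase_le u₀ U)) hsum with h | h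
    · exact .inl h
    · have := card_le_card hS₀
      rw [h, card_erase_of_mem hu₀, Nat.pred_eq_sub_one] at this
      have := card_pos.mpr hU.1
      omega
  · have hle : u₀ ::ₘ S₀ ≤ U := by simpa [cons_erase hu₀] using cons_le_cons u₀ hS₀
    have hsum' : (u₀ ::ₘ S₀).sum = 0 := by
      rw [sum_cons, ← hTsum, add_comm, ← sum_add, hsum]
    rcases hU.eq_zero_or_eq hle hsum' with h | h
    · exact absurd h cons_ne_zero
    · rw [← cons_erase hu₀, cons_inj_right] at h
      exact .inr (by rw [h])

theorem exists_multiset_mk_eq_sum_eq {H : AddSubgroup G} {u₀ : G} (hu₀ : u₀ ∈ H) (g : G)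
    (hg : 0 < addOrderOf (g : G ⧸ H)) :
    ∃ T : Multiset G, (∀ x ∈ T, (x : G ⧸ H) = g) ∧ card T = addOrderOf (g : G ⧸ H) ∧
      T.sum = u₀ := by
  set m := addOrderOf (g : G ⧸ H)
  refine ⟨(u₀ - (m - 1) • g) ::ₘ replicate (m - 1) g, fun x hx => ?_, by simp; omega,
    by simp⟩
  rcases mem_cons.mp hx with rfl | hx
  · have hm : (m - 1) • (g : G ⧸ H) = m • (g : G ⧸ H) - g := by
      rw [← Nat.sub_add_cancel hg, add_nsmul, one_nsmul, add_sub_cancel_right,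
        Nat.sub_add_cancel hg]
    rw [QuotientAddGroup.mk_sub, (QuotientAddGroup.eq_zero_iff _).mpr hu₀,
      QuotientAddGroup.mk_nsmul, hm, addOrderOf_nsmul_eq_zero]
    abel
  · rw [eq_of_mem_replicate hx]

theorem IsMinZeroSum.closure_eq_top_of_card_eq_dav [Fintype G] {U : Multiset G}
    (hU : IsMinZeroSum U) (hlen : card U = Dav G) : AddSubgroup.closure {x | x ∈ U} = ⊤ := by
  classical
  set H := AddSubgroup.closure {x | x ∈ U}
  refine eq_top_iff.mpr fun g _ => ?_
  by_contra hg
  have hq : 0 < addOrderOf (g : G ⧸ H) := addOrderOf_pos _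
  have hq1 : addOrderOf (g : G ⧸ H) ≠ 1 := by
    rwa [Ne, AddMonoid.addOrderOf_eq_one_iff, QuotientAddGroup.eq_zero_iff]
  have hUH : ∀ u ∈ U, u ∈ H := fun u hu => AddSubgroup.subset_closure hu
  obtain ⟨u₀, hu₀⟩ := exists_mem_of_ne_zero hU.1
  obtain ⟨T, hT, hTcard, hTsum⟩ := exists_multiset_mk_eq_sum_eq (hUH u₀ hu₀) g hq
  have hlong := (hU.erase_add hUH hu₀ hT hq hTcard hTsum).card_le_dav
  rw [card_add, card_erase_of_mem hu₀, Nat.pred_eq_sub_one, hTcard, ← hlen] at hlong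
  have := card_pos.mpr hU.1
  omega

theorem exists_exponent_eq_prime_pow [Finite G] {p : ℕ} (hp : p.Prime)
    (hpgroup : ∀ g : G, ∃ n : ℕ, p ^ n • g = 0) : ∃ k, AddMonoid.exponent G = p ^ k := by
  obtain ⟨g, hg⟩ :=
    AddMonoid.exists_addOrderOf_eq_exponent (AddMonoid.ExponentExists.of_finite (G := G))
  obtain ⟨n, hn⟩ := hpgroup g
  obtain ⟨k, -, hk⟩ := (Nat.dvd_prime_pow hp).mp (addOrderOf_dvd_of_nsmul_eq_zero hn)
  exact ⟨k, hg ▸ hk⟩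

theorem IsMinZeroSum.exists_mem_addOrderOf_eq_exponent [Fintype G] {p : ℕ} (hp : p.Prime)
    (hpgroup : ∀ g : G, ∃ n : ℕ, p ^ n • g = 0) {U : Multiset G} (hU : IsMinZeroSum U)
    (hlen : card U = Dav G) : ∃ g ∈ U, addOrderOf g = AddMonoid.exponent G := by
  obtain ⟨k, hk⟩ := exists_exponent_eq_prime_pow hp hpgroup
  by_contra! hne
  have hsmall : ∀ u ∈ U, ∃ j < k, addOrderOf u = p ^ j := by
    intro u hu
    obtain ⟨j, hjk, hj⟩ := (Nat.dvd_prime_pow hp).mp (hk ▸ AddMonoid.addOrder_dvd_exponent u)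
    exact ⟨j, hjk.lt_of_ne (by rintro rfl; exact hne u hu (hj.trans hk.symm)), hj⟩
  obtain ⟨j, hjk, -⟩ := hsmall _ (exists_mem_of_ne_zero hU.1).choose_spec
  have hker : (nsmulAddMonoidHom (α := G) (p ^ (k - 1))).ker = ⊤ := by
    refine top_le_iff.mp (hU.closure_eq_top_of_card_eq_dav hlen ▸ ?_)
    refine (AddSubgroup.closure_le _).mpr fun u hu => ?_
    obtain ⟨i, hik, hi⟩ := hsmall u hu
    exact addOrderOf_dvd_iff_nsmul_eq_zero.mp (hi ▸ pow_dvd_pow p (by omega))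
  have hdvd : p ^ k ∣ p ^ (k - 1) :=
    hk ▸ AddMonoid.exponent_dvd_of_forall_nsmul_eq_zero fun g =>
      AddMonoidHom.mem_ker.mp (hker ▸ AddSubgroup.mem_top g)
  have := (Nat.pow_dvd_pow_iff_le_right hp.one_lt).mp hdvd
  omega

end MinZeroSum

theorem Nat.exists_mul_eq_one_add_mul_of_coprime {d e : ℕ} (h : Nat.Coprime d e) :
    (∃ a b, a * d = 1 + b * e) ∨ ∃ a b, a * e = 1 + b * d := by
  rcases lt_or_ge 1 e with he | he
  · obtain ⟨m, -, hm⟩ := Nat.exists_mul_mod_eq_one_of_coprime h he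
    have := Nat.mod_add_div (d * m) e
    exact .inl ⟨m, d * m / e, by rw [hm] at this; linarith⟩
  interval_cases e
  · exact .inl ⟨1, 0, by simpa using h⟩
  · exact .inr ⟨1, 0, by simp⟩

section Factorization

variable {M : Type*} [AddCommMonoid M] {P : M → Prop} {i j : ℕ}

def HasFactorizationLengths (P : M → Prop) (i j : ℕ) : Prop :=
  ∃ L R : Multiset M,
    (∀ x ∈ L, P x) ∧ (∀ x ∈ R, P x) ∧ card L = i ∧ card R = j ∧ L.sum = R.sum

theorem HasFactorizationLengths.symm (h : HasFactorizationLengths P i j) :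
    HasFactorizationLengths P j i := by
  obtain ⟨L, R, hL, hR, hi, hj, hsum⟩ := h
  exact ⟨R, L, hR, hL, hj, hi, hsum.symm⟩

theorem HasFactorizationLengths.add {i' j' : ℕ} (h : HasFactorizationLengths P i j)
    (h' : HasFactorizationLengths P i' j') : HasFactorizationLengths P (i + i') (j + j') := by
  obtain ⟨L, R, hL, hR, rfl, rfl, hsum⟩ := h
  obtain ⟨L', R', hL', hR', rfl, rfl, hsum'⟩ := h'
  refine ⟨L + L', R + R', ?_, ?_, card_add _ _, card_add _ _,
    by rw [sum_add, sum_add, hsum, hsum']⟩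
  · simpa only [mem_add] using fun x hx => hx.elim (hL x) (hL' x)
  · simpa only [mem_add] using fun x hx => hx.elim (hR x) (hR' x)

theorem HasFactorizationLengths.nsmul (h : HasFactorizationLengths P i j) (n : ℕ) :
    HasFactorizationLengths P (n * i) (n * j) := by
  obtain ⟨L, R, hL, hR, rfl, rfl, hsum⟩ := h
  refine ⟨n • L, n • R, fun x hx => hL x (mem_of_mem_nsmul hx),
    fun x hx => hR x (mem_of_mem_nsmul hx), card_nsmul _ _, card_nsmul _ _, ?_⟩
  rw [sum_nsmul, sum_nsmul, hsum]

theorem HasFactorizationLengths.exists_succ_of_mul_eq {d e a b : ℕ}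
    (hd : HasFactorizationLengths P 2 (2 + d)) (he : HasFactorizationLengths P 2 (2 + e))
    (hab : a * d = 1 + b * e) : ∃ k, 0 < k ∧ HasFactorizationLengths P k (k + 1) := by
  have ha : 0 < a := Nat.pos_of_ne_zero (by rintro rfl; omega)
  refine ⟨a * 2 + b * (2 + e), by positivity, ?_⟩
  convert (hd.nsmul a).add (he.symm.nsmul b) using 1
  linarith

theorem HasFactorizationLengths.exists_succ_of_coprime {d e : ℕ}
    (hd : HasFactorizationLengths P 2 (2 + d)) (he : HasFactorizationLengths P 2 (2 + e))
    (hde : Nat.Coprime d e) : ∃ k, 0 < k ∧ HasFactorizationLengths P k (k + 1) := by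
  rcases Nat.exists_mul_eq_one_add_mul_of_coprime hde with ⟨a, b, hab⟩ | ⟨a, b, hab⟩
  · exact hd.exists_succ_of_mul_eq he hab
  · exact he.exists_succ_of_mul_eq hd hab

theorem HasFactorizationLengths.exists_fin (h : HasFactorizationLengths P i j) :
    ∃ (Us : Fin i → M) (Vs : Fin j → M), (∀ a, P (Us a)) ∧ (∀ b, P (Vs b)) ∧
      ∑ a, Us a = ∑ b, Vs b := by
  obtain ⟨⟨L⟩, ⟨R⟩, hL, hR, rfl, rfl, hsum⟩ := h
  exact ⟨fun a => L[a], fun b => R[b], fun a => hL _ (List.getElem_mem _),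
    fun b => hR _ (List.getElem_mem _),
    (Fin.sum_univ_getElem L).trans (hsum.trans (Fin.sum_univ_getElem R).symm)⟩

end Factorization

section Relations

variable {G : Type*} [AddCommGroup G]

def IsMinZeroSumOver (s : Set G) (S : Multiset G) : Prop :=
  IsMinZeroSum S ∧ ∀ x ∈ S, x ∈ s

theorem hasFactorizationLengths_two_addOrderOf {s : Set G} {g : G} (hgs : g ∈ s ∧ -g ∈ s)
    (hg : 1 < addOrderOf g) :
    HasFactorizationLengths (IsMinZeroSumOver s) 2 (addOrderOf g) := by
  have hg0 : g ≠ 0 := by rintro rfl; simp at hg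
  refine ⟨{replicate (addOrderOf g) g, replicate (addOrderOf g) (-g)},
    replicate (addOrderOf g) {g, -g}, ?_, ?_, rfl, card_replicate _ _, ?_⟩
  · simp only [insert_eq_cons, mem_cons, mem_singleton]
    rintro _ (rfl | rfl)
    · exact ⟨isMinZeroSum_replicate_addOrderOf (by omega),
        fun x hx => eq_of_mem_replicate hx ▸ hgs.1⟩
    · refine ⟨?_, fun x hx => eq_of_mem_replicate hx ▸ hgs.2⟩
      simpa only [addOrderOf_neg] using
        isMinZeroSum_replicate_addOrderOf (g := -g) (by rw [addOrderOf_neg]; omega)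
  · intro S hS
    rw [eq_of_mem_replicate hS]
    refine ⟨isMinZeroSum_pair hg0, ?_⟩
    simpa only [insert_eq_cons, mem_cons, mem_singleton] using
      fun x hx => hx.elim (· ▸ hgs.1) (· ▸ hgs.2)
  · simp [sum_replicate, insert_eq_cons, ← singleton_add, nsmul_singleton]

theorem hasFactorizationLengths_two_card {s : Set G} {U : Multiset G} (hU : IsMinZeroSum U)
    (hcard : 1 < card U) (hUs : ∀ x ∈ U, x ∈ s ∧ -x ∈ s) :
    HasFactorizationLengths (IsMinZeroSumOver s) 2 (card U) := by
  refine ⟨{U, U.map (AddEquiv.neg G)}, U.map fun u => {u, -u}, ?_, ?_, rfl, card_map _ _, ?_⟩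
  · simp only [insert_eq_cons, mem_cons, mem_singleton]
    rintro _ (rfl | rfl)
    · exact ⟨hU, fun x hx => (hUs x hx).1⟩
    · refine ⟨hU.map_addEquiv _, fun x hx => ?_⟩
      obtain ⟨u, hu, rfl⟩ := mem_map.mp hx
      exact (hUs u hu).2
  · intro S hS
    obtain ⟨u, hu, rfl⟩ := mem_map.mp hS
    refine ⟨isMinZeroSum_pair (hU.ne_zero_of_mem hcard hu), ?_⟩
    simpa only [insert_eq_cons, mem_cons, mem_singleton] using
      fun x hx => hx.elim (· ▸ (hUs u hu).1) (· ▸ (hUs u hu).2)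
  · rw [insert_eq_cons, sum_cons, sum_singleton]
    simp only [insert_eq_cons, ← singleton_add, sum_map_add, sum_map_singleton]
    rw [← sum_map_singleton (U.map _), map_map]
    rfl

end Relations

theorem stmt_9_general {G : Type*} [AddCommGroup G] [Fintype G] (p : ℕ) (hp : p.Prime)
    (hpgroup : ∀ g : G, ∃ n : ℕ, p ^ n • g = 0)
    (hgcd : Nat.gcd (AddMonoid.exponent G - 2) (Dav G - 2) = 1)
    (U : Multiset G) (hU : IsMinZeroSum U) (hlen : Multiset.card U = Dav G) :
    ∃ (k : ℕ), 0 < k ∧ ∃ (Us : Fin k → Multiset G) (Vs : Fin (k + 1) → Multiset G),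
      (∀ i, IsMinZeroSum (Us i) ∧ ∀ x ∈ Us i, x ∈ U ∨ -x ∈ U) ∧
      (∀ j, IsMinZeroSum (Vs j) ∧ ∀ x ∈ Vs j, x ∈ U ∨ -x ∈ U) ∧
      (∑ i, Us i) = (∑ j, Vs j) := by
  have : Nontrivial G := by
    by_contra h
    have : Subsingleton G := not_nontrivial_iff_subsingleton.mp h
    have := (dav_le_card (G := G)).trans (Fintype.card_le_one_iff_subsingleton.mpr this)
    rw [AddMonoid.exp_eq_one_of_subsingleton] at hgcd
    norm_num at hgcd
    omega
  have hexp : 2 ≤ AddMonoid.exponent G := AddMonoid.one_lt_exponent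
  have hdav : 2 ≤ Dav G := by
    obtain ⟨g, hg⟩ := exists_ne (0 : G)
    simpa using (isMinZeroSum_pair hg).card_le_dav
  obtain ⟨g, hgU, hg⟩ := hU.exists_mem_addOrderOf_eq_exponent hp hpgroup hlen
  have hUs : ∀ x ∈ U, x ∈ {x | x ∈ U ∨ -x ∈ U} ∧ -x ∈ {x | x ∈ U ∨ -x ∈ U} :=
    fun x hx => ⟨.inl hx, .inr (by rwa [neg_neg])⟩
  have hfg := hasFactorizationLengths_two_addOrderOf (hUs g hgU) (hg ▸ hexp)
  have hfU := hasFactorizationLengths_two_card hU (hlen ▸ hdav) hUs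
  rw [hg, ← Nat.add_sub_cancel' hexp] at hfg
  rw [hlen, ← Nat.add_sub_cancel' hdav] at hfU
  obtain ⟨k, hk, hfact⟩ := hfg.exists_succ_of_coprime hfU hgcd
  exact ⟨k, hk, hfact.exists_fin⟩

theorem stmt_9 {G : Type*} [AddCommGroup G] [Fintype G] (p : ℕ) (hp : p.Prime)
    (hpgroup : ∀ g : G, ∃ n : ℕ, p ^ n • g = 0)
    (hnoncyc : ¬ IsAddCyclic G)
    (hgcd : Nat.gcd (AddMonoid.exponent G - 2) (Dav G - 2) = 1)
    (U : Multiset G) (hU : IsMinZeroSum U) (hlen : Multiset.card U = Dav G) :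
    ∃ (k : ℕ), 0 < k ∧ ∃ (Us : Fin k → Multiset G) (Vs : Fin (k + 1) → Multiset G),
      (∀ i, IsMinZeroSum (Us i) ∧ ∀ x ∈ Us i, x ∈ U ∨ -x ∈ U) ∧
      (∀ j, IsMinZeroSum (Vs j) ∧ ∀ x ∈ Vs j, x ∈ U ∨ -x ∈ U) ∧
      (∑ i, Us i) = (∑ j, Vs j) :=
  stmt_9_general p hp hpgroup hgcd U hU hlen
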